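/- Suppose the groups G_1, …, G_M are pairwise disjoint and each contains at least k2 elements. Let z ∈ ℝ^p. For each j ∈ {1, …, M} let T_j ⊆ G_j with |T_j| = k2 and |z_a| ≥ |z_b| for all a ∈ T_j, b ∈ G_j \ T_j (the top-k2 entries of group j). Let G ⊆ {1, …, M} with |G| = k1 satisfy ‖z_{T_i}‖ ≥ ‖z_{T_j}‖ for all i ∈ G and j ∉ G (the k1 groups with largest top-k2 energy, as selected by Algorithm 3 of the paper), and set S = ∪_{i∈G} T_i. Let w* ∈ ℝ^p with S* = supp(w*), and suppose there is G* ⊆ {1, …, M} with |G*| ≤ k1* ≤ k1 such that S* ⊆ ∪_{j∈G*} G_j and |S* ∩ G_j| ≤ k2* ≤ k2 for every j. Then ‖z_{S*\S}‖² ≤ max(k1*/k1, k2*/k2) · ‖z_{S\S*}‖². -/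

import Mathlib

/-! Since the groups are disjoint, both sides split group by group. In a group chosen both in
`Gsel` and in `Gstar`, the entries of `S*` missed by `T_j` are at most `k2* - c` entries, each no
larger in modulus than any of the `k2 - c` entries of `T_j \ S*`, where `c = |S* ∩ T_j|`; as
`k2* ≤ k2`, this gives the factor `k2*/k2`. A group of `Gstar` that was not chosen contributes at
most `‖z_{T_j}‖²`, and the same exchange argument one level up, with groups ranked by
`‖z_{T_j}‖²`, bounds these contributions by `k1*/k1` times the energy of the groups chosen outside
`Gstar`, which lies entirely in `S \ S*`. -/

open Finset

noncomputable section

/-- The restriction of a vector to a coordinate set: agrees with `z` on `S`, zero off `S`. -/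
def restrict {p : ℕ} (z : EuclideanSpace ℝ (Fin p)) (S : Finset (Fin p)) :
    EuclideanSpace ℝ (Fin p) :=
  WithLp.toLp 2 (fun i => if i ∈ S then z i else 0)

open Classical in
/-- The support of a vector, as a finite set. -/
noncomputable def suppF {p : ℕ} (z : EuclideanSpace ℝ (Fin p)) : Finset (Fin p) :=
  Finset.univ.filter (fun i => z i ≠ 0)

/-- `w` is `k`-group-sparse w.r.t. the groups `G`. -/
def GroupSparse {p M : ℕ} (G : Fin M → Finset (Fin p)) (k : ℕ)
    (w : EuclideanSpace ℝ (Fin p)) : Prop :=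
  ∃ A : Finset (Fin M), A.card ≤ k ∧ suppF w ⊆ A.biUnion G

/-- `B_j`: the union of the first `j` selected groups. -/
def partialUnion {p M m : ℕ} (G : Fin M → Finset (Fin p)) (idx : Fin m → Fin M) (j : ℕ) :
    Finset (Fin p) :=
  (Finset.univ.filter (fun t : Fin m => (t : ℕ) < j)).biUnion (fun t => G (idx t))

/-- `idx` is a greedy selection for `z` (Algorithm 2 of the paper): at each step `j`,
the selected group maximizes the norm of `z` restricted to the yet-uncovered part. -/
def IsGreedySelection {p M m : ℕ} (G : Fin M → Finset (Fin p))
    (z : EuclideanSpace ℝ (Fin p)) (idx : Fin m → Fin M) : Prop :=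
  ∀ j : Fin m, ∀ ℓ : Fin M,
    ‖restrict z (G ℓ \ partialUnion G idx (j : ℕ))‖ ≤
      ‖restrict z (G (idx j) \ partialUnion G idx (j : ℕ))‖

/-- `w` is an exact projection of `z` onto `k`-group-sparse vectors. -/
def IsExactProj {p M : ℕ} (G : Fin M → Finset (Fin p)) (k : ℕ)
    (z w : EuclideanSpace ℝ (Fin p)) : Prop :=
  GroupSparse G k w ∧ ∀ w', GroupSparse G k w' → ‖w - z‖ ≤ ‖w' - z‖

/-- `f` satisfies restricted strong convexity / smoothness of order `k'`
with constants `α ≤ L`. -/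
def RSCRSS {p M : ℕ} (G : Fin M → Finset (Fin p)) (k' : ℕ) (α L : ℝ)
    (f : EuclideanSpace ℝ (Fin p) → ℝ) : Prop :=
  ContDiff ℝ 2 f ∧
  ∀ w : EuclideanSpace ℝ (Fin p), GroupSparse G k' w →
    ∀ v : EuclideanSpace ℝ (Fin p),
      α * ‖v‖ ^ 2 ≤ iteratedFDeriv ℝ 2 f w ![v, v] ∧
      iteratedFDeriv ℝ 2 f w ![v, v] ≤ L * ‖v‖ ^ 2

theorem norm_restrict_sq {p : ℕ} (z : EuclideanSpace ℝ (Fin p)) (S : Finset (Fin p)) :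
    ‖_root_.restrict z S‖ ^ 2 = ∑ i ∈ S, z i ^ 2 := by
  classical
  simp [EuclideanSpace.norm_sq_eq, _root_.restrict, apply_ite, sum_ite_mem]

section Exchange

variable {ι M : Type*} [AddCommMonoid M] [LinearOrder M] [IsOrderedAddMonoid M]
  {s t : Finset ι} {f : ι → M}

theorem Finset.nsmul_sum_le_nsmul_sum_of_forall_le {n m : ℕ} (hf : ∀ b ∈ t, 0 ≤ f b)
    (hst : ∀ a ∈ s, ∀ b ∈ t, f a ≤ f b) (hcard : n * #s ≤ m * #t) :
    n • ∑ a ∈ s, f a ≤ m • ∑ b ∈ t, f b := by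
  rcases t.eq_empty_or_nonempty with rfl | ht
  · obtain rfl | rfl : n = 0 ∨ s = ∅ := by simpa using hcard
    all_goals simp
  obtain ⟨c, hc, hmin⟩ := t.exists_min_image f ht
  calc n • ∑ a ∈ s, f a ≤ n • (#s • f c) :=
        nsmul_le_nsmul_right (sum_le_card_nsmul s f _ fun a ha => hst a ha c hc) n
    _ = (#s * n) • f c := (mul_nsmul _ _ _).symm
    _ ≤ (#t * m) • f c := nsmul_le_nsmul_left (hf c hc) (by linarith)
    _ = m • (#t • f c) := mul_nsmul _ _ _
    _ ≤ m • ∑ b ∈ t, f b := nsmul_le_nsmul_right (card_nsmul_le_sum t f _ hmin) m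

variable [DecidableEq ι]

theorem Finset.sum_le_sum_of_card_le_of_forall_sdiff_le (hf : ∀ b ∈ t, 0 ≤ f b)
    (hst : ∀ a ∈ s \ t, ∀ b ∈ t, f a ≤ f b) (hcard : #s ≤ #t) :
    ∑ a ∈ s, f a ≤ ∑ b ∈ t, f b := by
  have hsdiff : 1 * #(s \ t) ≤ 1 * #(t \ s) := by
    have := card_inter_add_card_sdiff s t
    have := card_inter_add_card_sdiff t s
    rw [inter_comm] at this
    omega
  have h := nsmul_sum_le_nsmul_sum_of_forall_le (fun b hb => hf b (mem_sdiff.1 hb).1)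
    (fun a ha b hb => hst a ha b (mem_sdiff.1 hb).1) hsdiff
  rw [← sum_inter_add_sum_sdiff s t, ← sum_inter_add_sum_sdiff t s, inter_comm]
  exact add_le_add_right (by simpa using h) _

theorem Finset.card_nsmul_sum_sdiff_le_nsmul_sum_sdiff {k : ℕ} (hf : ∀ b ∈ t, 0 ≤ f b)
    (hst : ∀ a ∈ s \ t, ∀ b ∈ t, f a ≤ f b) (hs : #s ≤ k) (hk : k ≤ #t) :
    #t • ∑ a ∈ s \ t, f a ≤ k • ∑ b ∈ t \ s, f b := by
  refine nsmul_sum_le_nsmul_sum_of_forall_le (fun b hb => hf b (mem_sdiff.1 hb).1)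
    (fun a ha b hb => hst a ha b (mem_sdiff.1 hb).1) ?_
  have hs' := card_inter_add_card_sdiff s t
  have ht' := card_inter_add_card_sdiff t s
  rw [inter_comm] at ht'
  nlinarith

end Exchange

section TopEntries

variable {ι : Type*} [DecidableEq ι] {s g T : Finset ι} {z : ι → ℝ}

theorem sq_le_sq_of_forall_abs_le (htop : ∀ a ∈ T, ∀ b ∈ g \ T, |z b| ≤ |z a|) :
    ∀ a ∈ (s ∩ g) \ T, ∀ b ∈ T, z a ^ 2 ≤ z b ^ 2 := fun a ha b hb =>
  sq_le_sq.2 (htop b hb a (sdiff_subset_sdiff inter_subset_right subset_rfl ha))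

theorem Finset.sum_sq_inter_le_sum_sq (htop : ∀ a ∈ T, ∀ b ∈ g \ T, |z b| ≤ |z a|)
    (hs : #(s ∩ g) ≤ #T) : ∑ i ∈ s ∩ g, z i ^ 2 ≤ ∑ i ∈ T, z i ^ 2 :=
  sum_le_sum_of_card_le_of_forall_sdiff_le (fun _ _ => sq_nonneg _)
    (sq_le_sq_of_forall_abs_le htop) hs

theorem Finset.card_mul_sum_sq_sdiff_le (hT : T ⊆ g)
    (htop : ∀ a ∈ T, ∀ b ∈ g \ T, |z b| ≤ |z a|) {k : ℕ} (hs : #(s ∩ g) ≤ k) (hk : k ≤ #T) :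
    #T * ∑ i ∈ (s ∩ g) \ T, z i ^ 2 ≤ k * ∑ i ∈ T \ s, z i ^ 2 := by
  have h := card_nsmul_sum_sdiff_le_nsmul_sum_sdiff (fun _ _ => sq_nonneg _)
    (sq_le_sq_of_forall_abs_le htop) hs hk
  have hTs : T \ (s ∩ g) = T \ s := by
    ext x
    have := @hT x
    simp only [mem_sdiff, mem_inter]
    tauto
  simpa only [hTs, nsmul_eq_mul] using h

end TopEntries

section DisjointGroups

open Function

variable {ι κ : Type*} [DecidableEq ι] {G T : κ → Finset ι}

theorem Finset.sum_eq_sum_sum_inter_of_subset_biUnion {M : Type*} [AddCommMonoid M]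
    {I : Finset κ} {s : Finset ι} (f : ι → M) (hG : (I : Set κ).PairwiseDisjoint G)
    (hs : s ⊆ I.biUnion G) : ∑ i ∈ s, f i = ∑ j ∈ I, ∑ i ∈ s ∩ G j, f i := by
  rw [← sum_biUnion (hG.mono fun j => inter_subset_right), ← inter_biUnion, inter_eq_left.2 hs]

theorem Finset.mem_biUnion_iff_of_mem (hG : Pairwise (Disjoint on G)) (hT : ∀ j, T j ⊆ G j)
    {I : Finset κ} {j : κ} {x : ι} (hx : x ∈ G j) :
    x ∈ I.biUnion T ↔ j ∈ I ∧ x ∈ T j := by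
  refine ⟨fun h => ?_, fun ⟨hj, hxj⟩ => mem_biUnion.2 ⟨j, hj, hxj⟩⟩
  obtain ⟨i, hi, hxi⟩ := mem_biUnion.1 h
  obtain rfl : i = j := hG.eq <| not_disjoint_iff.2 ⟨x, hT i hxi, hx⟩
  exact ⟨hi, hxi⟩

theorem Finset.sdiff_biUnion_inter_of_mem (hG : Pairwise (Disjoint on G)) (hT : ∀ j, T j ⊆ G j)
    {I : Finset κ} {j : κ} (hj : j ∈ I) (s : Finset ι) :
    (s \ I.biUnion T) ∩ G j = (s ∩ G j) \ T j := by
  ext x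
  simp only [mem_inter, mem_sdiff]
  constructor
  · rintro ⟨⟨hs, hS⟩, hx⟩
    exact ⟨⟨hs, hx⟩, fun hxT => hS ((mem_biUnion_iff_of_mem hG hT hx).2 ⟨hj, hxT⟩)⟩
  · rintro ⟨⟨hs, hx⟩, hxT⟩
    exact ⟨⟨hs, fun hS => hxT ((mem_biUnion_iff_of_mem hG hT hx).1 hS).2⟩, hx⟩

theorem Finset.sdiff_biUnion_inter_of_notMem (hG : Pairwise (Disjoint on G))
    (hT : ∀ j, T j ⊆ G j) {I : Finset κ} {j : κ} (hj : j ∉ I) (s : Finset ι) :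
    (s \ I.biUnion T) ∩ G j = s ∩ G j := by
  ext x
  simp only [mem_inter, mem_sdiff]
  exact ⟨fun h => ⟨h.1.1, h.2⟩,
    fun h => ⟨⟨h.1, fun hS => hj ((mem_biUnion_iff_of_mem hG hT h.2).1 hS).1⟩, h.2⟩⟩

theorem Finset.sdiff_eq_self_of_subset_biUnion (hG : Pairwise (Disjoint on G))
    (hT : ∀ j, T j ⊆ G j) {I : Finset κ} {j : κ} (hj : j ∉ I) {s : Finset ι}
    (hs : s ⊆ I.biUnion G) : T j \ s = T j :=
  sdiff_eq_self_of_disjoint <| ((disjoint_biUnion_right _ _ _).2 fun _ hi =>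
    hG (ne_of_mem_of_not_mem hi hj).symm).mono (hT j) hs

theorem Finset.pos_of_subset_biUnion {I : Finset κ} {s : Finset ι} (hs : s.Nonempty)
    (hsI : s ⊆ I.biUnion G) {k₁ k₂ : ℕ} (hI : #I ≤ k₁) (hsG : ∀ j, #(s ∩ G j) ≤ k₂) :
    0 < k₁ ∧ 0 < k₂ := by
  obtain ⟨x, hx⟩ := hs
  obtain ⟨j, hj, hxj⟩ := mem_biUnion.1 (hsI hx)
  exact ⟨(card_pos.2 ⟨j, hj⟩).trans_le hI,
    (card_pos.2 ⟨x, mem_inter.2 ⟨hx, hxj⟩⟩).trans_le (hsG j)⟩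

theorem Finset.sum_biUnion_sdiff (hT : Pairwise (Disjoint on T)) {M : Type*} [AddCommMonoid M]
    (I : Finset κ) (s : Finset ι) (f : ι → M) :
    ∑ i ∈ I.biUnion T \ s, f i = ∑ j ∈ I, ∑ i ∈ T j \ s, f i := by
  rw [sum_eq_sum_sum_inter_of_subset_biUnion f (hT.set_pairwise _) sdiff_subset]
  exact sum_congr rfl fun j hj => by
    rw [sdiff_inter_right_comm, inter_eq_right.2 (subset_biUnion_of_mem T hj)]

end DisjointGroups

theorem Finset.sum_le_max_mul_sum {κ R : Type*} [DecidableEq κ] [Semiring R] [LinearOrder R]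
    [IsOrderedRing R] {I J : Finset κ} {L U : κ → R} {a b : R} (hU : ∀ j ∈ J, 0 ≤ U j)
    (hin : ∀ j ∈ I ∩ J, L j ≤ a * U j) (hout : ∑ j ∈ I \ J, L j ≤ b * ∑ j ∈ J \ I, U j) :
    ∑ j ∈ I, L j ≤ max b a * ∑ j ∈ J, U j := by
  have hUin : 0 ≤ ∑ j ∈ J ∩ I, U j := sum_nonneg fun j hj => hU j (mem_inter.1 hj).1
  have hUout : 0 ≤ ∑ j ∈ J \ I, U j := sum_nonneg fun j hj => hU j (mem_sdiff.1 hj).1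
  calc ∑ j ∈ I, L j = ∑ j ∈ I ∩ J, L j + ∑ j ∈ I \ J, L j := (sum_inter_add_sum_sdiff _ _ _).symm
    _ ≤ a * ∑ j ∈ J ∩ I, U j + b * ∑ j ∈ J \ I, U j := by
        rw [mul_sum, inter_comm J I]
        exact add_le_add (sum_le_sum hin) hout
    _ ≤ max b a * ∑ j ∈ J ∩ I, U j + max b a * ∑ j ∈ J \ I, U j := by
        gcongr
        exacts [le_max_right _ _, le_max_left _ _]
    _ = max b a * ∑ j ∈ J, U j := by rw [← mul_add, sum_inter_add_sum_sdiff]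

theorem stmt_14_general (p M : ℕ)
    (G : Fin M → Finset (Fin p))
    (hdisj : ∀ i j : Fin M, i ≠ j → Disjoint (G i) (G j))
    (k1 k2 k1s k2s : ℕ) (hk1 : k1s ≤ k1) (hk2 : k2s ≤ k2)
    (z : EuclideanSpace ℝ (Fin p))
    (T : Fin M → Finset (Fin p))
    (hTsub : ∀ j : Fin M, T j ⊆ G j)
    (hTcard : ∀ j : Fin M, (T j).card = k2)
    (hTtop : ∀ j : Fin M, ∀ a ∈ T j, ∀ b ∈ G j \ T j, |z b| ≤ |z a|)
    (Gsel : Finset (Fin M)) (hGsel : Gsel.card = k1)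
    (hsel : ∀ i ∈ Gsel, ∀ j ∉ Gsel, ‖restrict z (T j)‖ ≤ ‖restrict z (T i)‖)
    (wstar : EuclideanSpace ℝ (Fin p))
    (Gstar : Finset (Fin M)) (hGstarcard : Gstar.card ≤ k1s)
    (hGstarcov : suppF wstar ⊆ Gstar.biUnion G)
    (hGstarper : ∀ j : Fin M, (suppF wstar ∩ G j).card ≤ k2s) :
    ‖restrict z (suppF wstar \ Gsel.biUnion T)‖ ^ 2 ≤
      max ((k1s : ℝ) / (k1 : ℝ)) ((k2s : ℝ) / (k2 : ℝ)) *
        ‖restrict z (Gsel.biUnion T \ suppF wstar)‖ ^ 2 := by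
  classical
  set Sstar := suppF wstar
  have hG : Pairwise (Function.onFun Disjoint G) := fun i j => hdisj i j
  rcases Sstar.eq_empty_or_nonempty with hS | hS
  · rw [hS, empty_sdiff, norm_restrict_sq, sum_empty]
    positivity
  obtain ⟨hk1s, hk2s⟩ := pos_of_subset_biUnion hS hGstarcov hGstarcard hGstarper
  have hk1pos : (0 : ℝ) < k1 := by exact_mod_cast hk1s.trans_le hk1
  have hk2pos : (0 : ℝ) < k2 := by exact_mod_cast hk2s.trans_le hk2
  rw [norm_restrict_sq, norm_restrict_sq,
    sum_biUnion_sdiff fun i j hij => (hG hij).mono (hTsub i) (hTsub j),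
    sum_eq_sum_sum_inter_of_subset_biUnion _ (hG.set_pairwise _) (sdiff_subset.trans hGstarcov)]
  refine sum_le_max_mul_sum (fun j _ => by positivity) (fun j hj => ?_) ?_
  · rw [sdiff_biUnion_inter_of_mem hG hTsub (mem_inter.1 hj).2, div_mul_eq_mul_div,
      le_div_iff₀' hk2pos]
    exact_mod_cast hTcard j ▸ card_mul_sum_sq_sdiff_le (hTsub j) (hTtop j) (hGstarper j)
      (hTcard j ▸ hk2)
  · calc ∑ j ∈ Gstar \ Gsel, ∑ i ∈ (Sstar \ Gsel.biUnion T) ∩ G j, z i ^ 2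
          ≤ ∑ j ∈ Gstar \ Gsel, ∑ i ∈ T j, z i ^ 2 := sum_le_sum fun j hj => by
            rw [sdiff_biUnion_inter_of_notMem hG hTsub (mem_sdiff.1 hj).2]
            exact sum_sq_inter_le_sum_sq (hTtop j) ((hGstarper j).trans (hTcard j ▸ hk2))
      _ ≤ k1s / k1 * ∑ j ∈ Gsel \ Gstar, ∑ i ∈ T j, z i ^ 2 := by
          have h := card_nsmul_sum_sdiff_le_nsmul_sum_sdiff (s := Gstar) (t := Gsel)
            (f := fun j => ‖restrict z (T j)‖ ^ 2) (fun _ _ => by positivity)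
            (fun a ha b hb => pow_le_pow_left₀ (norm_nonneg _) (hsel b hb a (mem_sdiff.1 ha).2) 2)
            hGstarcard (hGsel ▸ hk1)
          simp only [norm_restrict_sq, hGsel, nsmul_eq_mul] at h
          rwa [div_mul_eq_mul_div, le_div_iff₀' hk1pos]
      _ = k1s / k1 * ∑ j ∈ Gsel \ Gstar, ∑ i ∈ T j \ Sstar, z i ^ 2 := by
          congr 1
          exact sum_congr rfl fun j hj => by
            rw [sdiff_eq_self_of_subset_biUnion hG hTsub (mem_sdiff.1 hj).2 hGstarcov]

/-- Lemma `sogfinal` of the paper: sparse overlapping groups with disjoint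
groups. With `S = ∪_{i∈Gsel} T_i` the output of the greedy SoG selection (Algorithm 3) and
`S* = supp(w*)` covered by at most `k1*` groups with at most `k2*` entries per group,
`‖z_{S*\S}‖² ≤ max(k1*/k1, k2*/k2)·‖z_{S\S*}‖²`. -/
theorem stmt_14 (p M : ℕ) (hp : 1 ≤ p) (hM : 1 ≤ M)
    (G : Fin M → Finset (Fin p)) (hcov : ∀ i : Fin p, ∃ j : Fin M, i ∈ G j)
    (hdisj : ∀ i j : Fin M, i ≠ j → Disjoint (G i) (G j))
    (k1 k2 k1s k2s : ℕ) (hk1 : k1s ≤ k1) (hk2 : k2s ≤ k2)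
    (hsize : ∀ j : Fin M, k2 ≤ (G j).card)
    (z : EuclideanSpace ℝ (Fin p))
    (T : Fin M → Finset (Fin p))
    (hTsub : ∀ j : Fin M, T j ⊆ G j)
    (hTcard : ∀ j : Fin M, (T j).card = k2)
    (hTtop : ∀ j : Fin M, ∀ a ∈ T j, ∀ b ∈ G j \ T j, |z b| ≤ |z a|)
    (Gsel : Finset (Fin M)) (hGsel : Gsel.card = k1)
    (hsel : ∀ i ∈ Gsel, ∀ j ∉ Gsel, ‖restrict z (T j)‖ ≤ ‖restrict z (T i)‖)
    (wstar : EuclideanSpace ℝ (Fin p))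
    (Gstar : Finset (Fin M)) (hGstarcard : Gstar.card ≤ k1s)
    (hGstarcov : suppF wstar ⊆ Gstar.biUnion G)
    (hGstarper : ∀ j : Fin M, (suppF wstar ∩ G j).card ≤ k2s) :
    ‖restrict z (suppF wstar \ Gsel.biUnion T)‖ ^ 2 ≤
      max ((k1s : ℝ) / (k1 : ℝ)) ((k2s : ℝ) / (k2 : ℝ)) *
        ‖restrict z (Gsel.biUnion T \ suppF wstar)‖ ^ 2 :=
  stmt_14_general p M G hdisj k1 k2 k1s k2s hk1 hk2 z T hTsub hTcard hTtop Gsel hGsel hsel wstar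
    Gstar hGstarcard hGstarcov hGstarper
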